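/- Balanced dynamics on the dual projective plane (Lemma 2.12, diagonal case): Let a_n = diag(1, β_n, γ_n) ∈ GL(3,ℝ) with 0 < γ_n ≤ β_n ≤ 1 for all n, β_n → 0 and γ_n/β_n → 0, acting on the dual projective plane ℝP²*. Then: (1) for every [f] = [f₁:f₂:f₃]* with f₃ ≠ 0, D_{(a_n)}([f]) = {[0:0:1]*}; (2) for every [f] with f₃ = 0 and [f] ≠ [1:0:0]*, D_{(a_n)}([f]) = {[g₁:g₂:g₃]* : g₁ = 0} (the set of classes of forms vanishing at e₁); (3) D_{(a_n)}([1:0:0]*) = ℝP²*. -/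

import Mathlib

open Matrix Filter Topology Set

noncomputable section

/-- `V3` is `ℝ³`. -/
abbrev V3 : Type := Fin 3 → ℝ

/-- The group `GL(3,ℝ)` of invertible `3 × 3` real matrices. -/
abbrev GL3 : Type := (Matrix (Fin 3) (Fin 3) ℝ)ˣ

/-- Nonzero vectors of `ℝ³` up to a nonzero scalar. -/
def projSetoid : Setoid {v : V3 // v ≠ 0} where
  r v w := ∃ c : ℝ, c ≠ 0 ∧ w.1 = c • v.1
  iseqv := by
    refine ⟨fun v => ⟨1, one_ne_zero, (one_smul ℝ v.1).symm⟩, ?_, ?_⟩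
    · rintro v w ⟨c, hc, h⟩
      exact ⟨c⁻¹, inv_ne_zero hc, by rw [h, smul_smul, inv_mul_cancel₀ hc, one_smul]⟩
    · rintro u v w ⟨c, hc, h⟩ ⟨d, hd, h'⟩
      exact ⟨d * c, mul_ne_zero hd hc, by rw [h', h, smul_smul]⟩

/-- The real projective plane `ℝP²`, as the quotient of `ℝ³ \ {0}` by nonzero scalings,
with the quotient topology.  (We use the same model for the dual projective plane `ℝP²*`,
a class `[f₁ : f₂ : f₃]*` of linear forms being recorded through its coefficient
vector `(f₁, f₂, f₃)`; the form acts on vectors by the dot product.) -/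
def RP2 : Type := Quotient projSetoid

/-- The projective class `[v]` of a nonzero vector. -/
def RP2.mk (v : V3) (hv : v ≠ 0) : RP2 := Quotient.mk projSetoid ⟨v, hv⟩

instance : TopologicalSpace RP2 :=
  inferInstanceAs (TopologicalSpace (Quotient projSetoid))

lemma RP2.ind {P : RP2 → Prop} (h : ∀ (v : V3) (hv : v ≠ 0), P (RP2.mk v hv)) (p : RP2) : P p := by
  refine Quotient.ind (fun a => ?_) p
  exact h a.1 a.2

lemma RP2.mk_eq_mk_iff {v w : V3} {hv : v ≠ 0} {hw : w ≠ 0} :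
    RP2.mk v hv = RP2.mk w hw ↔ ∃ c : ℝ, c ≠ 0 ∧ w = c • v :=
  ⟨fun h => Quotient.exact h, fun h => Quotient.sound h⟩

lemma ne_zero_of_coord {v : V3} (i : Fin 3) (h : v i ≠ 0) : v ≠ 0 :=
  fun h0 => h (by rw [h0]; rfl)

/-- The projective class of a vector, defaulting to `[e₁]` for the zero vector. -/
def RP2.mk' (v : V3) : RP2 :=
  if h : v = 0 then RP2.mk ![1, 0, 0] (ne_zero_of_coord 0 (by simp)) else RP2.mk v h

lemma e1_ne : (![1, 0, 0] : V3) ≠ 0 := ne_zero_of_coord 0 (by norm_num)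

lemma e3_ne : (![0, 0, 1] : V3) ≠ 0 := ne_zero_of_coord 2 (by simp)

lemma GL3.mulVec_ne {g : GL3} {v : V3} (hv : v ≠ 0) :
    (g : Matrix (Fin 3) (Fin 3) ℝ) *ᵥ v ≠ 0 := by
  intro h
  apply hv
  have h2 : ((g⁻¹ : GL3) : Matrix (Fin 3) (Fin 3) ℝ) *ᵥ
      ((g : Matrix (Fin 3) (Fin 3) ℝ) *ᵥ v) = 0 := by rw [h, Matrix.mulVec_zero]
  rwa [Matrix.mulVec_mulVec, Units.inv_mul, Matrix.one_mulVec] at h2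

/-- The action of `g ∈ GL(3,ℝ)` on `ℝP²`, `g · [v] = [g v]`. -/
def RP2.mapMat (g : GL3) : RP2 → RP2 :=
  Quotient.lift
    (fun a : {v : V3 // v ≠ 0} =>
      RP2.mk ((g : Matrix (Fin 3) (Fin 3) ℝ) *ᵥ a.1) (GL3.mulVec_ne a.2))
    (by
      rintro a b ⟨c, hc, h⟩
      apply Quotient.sound
      refine ⟨c, hc, ?_⟩
      show (g : Matrix (Fin 3) (Fin 3) ℝ) *ᵥ b.1 = c • ((g : Matrix (Fin 3) (Fin 3) ℝ) *ᵥ a.1)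
      rw [h, Matrix.mulVec_smul])

lemma RP2.mapMat_mk (g : GL3) (v : V3) (hv : v ≠ 0) :
    RP2.mapMat g (RP2.mk v hv) =
      RP2.mk ((g : Matrix (Fin 3) (Fin 3) ℝ) *ᵥ v) (GL3.mulVec_ne hv) := rfl

/-- The element of `GL(3,ℝ)` acting on coefficient vectors of linear forms the way `g`
acts on `ℝP²*`:  the coefficient vector of `f ∘ g⁻¹` is `(g⁻¹)ᵀ` applied to that of `f`. -/
def dualGL (g : GL3) : GL3 where
  val := ((g⁻¹ : GL3) : Matrix (Fin 3) (Fin 3) ℝ)ᵀ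
  inv := ((g : GL3) : Matrix (Fin 3) (Fin 3) ℝ)ᵀ
  val_inv := by rw [← Matrix.transpose_mul, Units.mul_inv, Matrix.transpose_one]
  inv_val := by rw [← Matrix.transpose_mul, Units.inv_mul, Matrix.transpose_one]

/-- The flag space `X`: pairs `([v], [f]) ∈ ℝP² × ℝP²*` with `f(v) = 0`. -/
def FlagSpace : Set (RP2 × RP2) :=
  {x | ∀ (v f : V3) (hv : v ≠ 0) (hf : f ≠ 0),
    x.1 = RP2.mk v hv → x.2 = RP2.mk f hf → f ⬝ᵥ v = 0}

/-- Points of the flag space. -/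
abbrev Flag3 : Type := ↥FlagSpace

lemma mem_flagSpace_mk {v f : V3} (hv : v ≠ 0) (hf : f ≠ 0) (h : f ⬝ᵥ v = 0) :
    (RP2.mk v hv, RP2.mk f hf) ∈ FlagSpace := by
  rintro v' f' hv' hf' hp hq
  obtain ⟨c, hc, hcv⟩ := RP2.mk_eq_mk_iff.1 hp
  obtain ⟨d, hd, hdf⟩ := RP2.mk_eq_mk_iff.1 hq
  rw [hcv, hdf, smul_dotProduct, dotProduct_smul, h]
  simp

lemma dot_invariance (g : GL3) (v f : V3) :
    (((dualGL g : GL3) : Matrix (Fin 3) (Fin 3) ℝ) *ᵥ f) ⬝ᵥ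
      ((g : Matrix (Fin 3) (Fin 3) ℝ) *ᵥ v) = f ⬝ᵥ v := by
  have h1 : ((dualGL g : GL3) : Matrix (Fin 3) (Fin 3) ℝ) *ᵥ f =
      f ᵥ* ((g⁻¹ : GL3) : Matrix (Fin 3) (Fin 3) ℝ) := Matrix.mulVec_transpose _ _
  rw [h1, Matrix.dotProduct_mulVec, Matrix.vecMul_vecMul, Units.inv_mul, Matrix.vecMul_one]

lemma flagPair_mem (g : GL3) {x : RP2 × RP2} (hx : x ∈ FlagSpace) :
    (RP2.mapMat g x.1, RP2.mapMat (dualGL g) x.2) ∈ FlagSpace := by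
  obtain ⟨p, q⟩ := x
  revert hx
  refine Quotient.inductionOn₂ p q ?_
  rintro ⟨v, hv⟩ ⟨f, hf⟩ hx
  have h0 : f ⬝ᵥ v = 0 := hx v f hv hf rfl rfl
  exact mem_flagSpace_mk _ _ (by rw [dot_invariance]; exact h0)

/-- The action of `g ∈ GL(3,ℝ)` on the flag space,
`g · ([v], [f]) = ([g v], [f ∘ g⁻¹])`. -/
def flagMap (g : GL3) (x : Flag3) : Flag3 :=
  ⟨(RP2.mapMat g x.1.1, RP2.mapMat (dualGL g) x.1.2), flagPair_mem g x.2⟩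

/-! ### Composition laws and continuity -/

lemma RP2.mapMat_mapMat (g h : GL3) (p : RP2) :
    RP2.mapMat g (RP2.mapMat h p) = RP2.mapMat (g * h) p := by
  refine Quotient.inductionOn p fun a => ?_
  apply Quotient.sound
  exact ⟨1, one_ne_zero, by simp [Matrix.mulVec_mulVec, Units.val_mul]⟩

lemma RP2.mapMat_one (p : RP2) : RP2.mapMat 1 p = p := by
  refine Quotient.inductionOn p fun a => ?_
  apply Quotient.sound
  exact ⟨1, one_ne_zero, by simp [Matrix.one_mulVec, Units.val_one]⟩

lemma dualGL_mul (g h : GL3) : dualGL (g * h) = dualGL g * dualGL h := by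
  apply Units.ext
  rw [Units.val_mul]
  show (((g * h)⁻¹ : GL3) : Matrix (Fin 3) (Fin 3) ℝ)ᵀ =
    ((g⁻¹ : GL3) : Matrix (Fin 3) (Fin 3) ℝ)ᵀ * ((h⁻¹ : GL3) : Matrix (Fin 3) (Fin 3) ℝ)ᵀ
  rw [_root_.mul_inv_rev, Units.val_mul, Matrix.transpose_mul]

lemma dualGL_one : dualGL (1 : GL3) = 1 := by
  apply Units.ext
  show (((1 : GL3)⁻¹ : GL3) : Matrix (Fin 3) (Fin 3) ℝ)ᵀ = ((1 : GL3) : Matrix (Fin 3) (Fin 3) ℝ)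
  rw [inv_one, Units.val_one, Matrix.transpose_one]

lemma flagMap_flagMap (g h : GL3) (x : Flag3) :
    flagMap g (flagMap h x) = flagMap (g * h) x := by
  apply Subtype.ext
  apply Prod.ext
  · exact RP2.mapMat_mapMat g h x.1.1
  · show RP2.mapMat (dualGL g) (RP2.mapMat (dualGL h) x.1.2) = RP2.mapMat (dualGL (g * h)) x.1.2
    rw [RP2.mapMat_mapMat, dualGL_mul]

lemma flagMap_one (x : Flag3) : flagMap 1 x = x := by
  apply Subtype.ext
  apply Prod.ext
  · exact RP2.mapMat_one x.1.1
  · show RP2.mapMat (dualGL 1) x.1.2 = x.1.2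
    rw [dualGL_one, RP2.mapMat_one]

lemma continuous_mulVec (M : Matrix (Fin 3) (Fin 3) ℝ) :
    Continuous fun v : V3 => M *ᵥ v := by
  have h : (fun v : V3 => M *ᵥ v) = fun v => fun i => ∑ j, M i j * v j := by
    funext v i
    simp [Matrix.mulVec, dotProduct]
  rw [h]
  exact continuous_pi fun i =>
    continuous_finset_sum _ fun j _ => continuous_const.mul (continuous_apply j)

lemma continuous_mapMat (g : GL3) : Continuous (RP2.mapMat g) := by
  apply Continuous.quotient_lift
  exact continuous_quotient_mk'.comp
    (Continuous.subtype_mk ((continuous_mulVec _).comp continuous_subtype_val) _)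

lemma continuous_flagMap (g : GL3) : Continuous (flagMap g) := by
  apply Continuous.subtype_mk
  exact ((continuous_mapMat g).comp (continuous_fst.comp continuous_subtype_val)).prodMk
    ((continuous_mapMat (dualGL g)).comp (continuous_snd.comp continuous_subtype_val))

/-- The action of `g ∈ GL(3,ℝ)` on the flag space, as a homeomorphism. -/
def flagHomeo (g : GL3) : Flag3 ≃ₜ Flag3 where
  toFun := flagMap g
  invFun := flagMap g⁻¹
  left_inv := fun x => by rw [flagMap_flagMap, inv_mul_cancel, flagMap_one]
  right_inv := fun x => by rw [flagMap_flagMap, mul_inv_cancel, flagMap_one]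
  continuous_toFun := continuous_flagMap g
  continuous_invFun := continuous_flagMap g⁻¹

/-- The group of homeomorphisms of a topological space
(with `(f * g) x = f (g x)`). -/
instance homeoGroup (Z : Type*) [TopologicalSpace Z] : Group (Z ≃ₜ Z) where
  mul f g := g.trans f
  one := Homeomorph.refl Z
  inv := Homeomorph.symm
  mul_assoc _ _ _ := Homeomorph.ext fun _ => rfl
  one_mul _ := Homeomorph.ext fun _ => rfl
  mul_one _ := Homeomorph.ext fun _ => rfl
  inv_mul_cancel f := Homeomorph.ext fun x => f.symm_apply_apply x

/-! ### Geometric objects in the flag space -/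

/-- The α-circle of a point `p ∈ ℝP²`: all flags whose point is `p`. -/
def Cα (p : RP2) : Set Flag3 := {x | x.1.1 = p}

/-- The β-circle of the projective line with defining form (class) `q`:
all flags whose plane is `ker q`. -/
def Cβ (q : RP2) : Set Flag3 := {x | x.1.2 = q}

/-- The plane of the flag `x` contains the direction of the vector `u`. -/
def planeContains (x : Flag3) (u : V3) : Prop :=
  ∀ (f : V3) (hf : f ≠ 0), x.1.2 = RP2.mk f hf → f ⬝ᵥ u = 0

/-- The point of the flag `x` lies on the projective line defined by the linear
form of coefficients `w`. -/
def pointOnForm (x : Flag3) (w : V3) : Prop :=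
  ∀ (v : V3) (hv : v ≠ 0), x.1.1 = RP2.mk v hv → w ⬝ᵥ v = 0

/-- The β-circle of the projective line spanned by the (independent) directions of
`u` and `w`: all flags whose plane contains both. -/
def CβSpan (u w : V3) : Set Flag3 := {x | planeContains x u ∧ planeContains x w}

lemma li_ne_zero_0 {v1 v2 v3 : V3} (h : LinearIndependent ℝ ![v1, v2, v3]) : v1 ≠ 0 := by
  have := h.ne_zero 0; simpa using this

lemma li_ne_zero_1 {v1 v2 v3 : V3} (h : LinearIndependent ℝ ![v1, v2, v3]) : v2 ≠ 0 := by
  have := h.ne_zero 1; simpa using this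

lemma li_ne_zero_2 {v1 v2 v3 : V3} (h : LinearIndependent ℝ ![v1, v2, v3]) : v3 ≠ 0 := by
  have := h.ne_zero 2; simpa using this

/-- The repulsive bouquet of circles `B⁻(g) = C_α([v₃]) ∪ C_β(span(v₂,v₃))` of a
loxodromic element with eigenvectors `v₁, v₂, v₃` (eigenvalues in decreasing order
of modulus). -/
def bouquetMinus (v2 v3 : V3) (h3 : v3 ≠ 0) : Set Flag3 :=
  Cα (RP2.mk v3 h3) ∪ CβSpan v2 v3

/-- The attractive bouquet of circles `B⁺(g) = C_α([v₁]) ∪ C_β(span(v₁,v₂))`. -/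
def bouquetPlus (v1 v2 : V3) (h1 : v1 ≠ 0) : Set Flag3 :=
  Cα (RP2.mk v1 h1) ∪ CβSpan v1 v2

/-- The dynamic set of a point `x` under a sequence of maps `g n`: all limits of
`g (n k) (x k)` for a strictly increasing sequence `(n k)` and a sequence `x k → x`. -/
def DynSet {M : Type*} [TopologicalSpace M] (g : ℕ → M → M) (x : M) : Set M :=
  {y | ∃ φ : ℕ → ℕ, StrictMono φ ∧ ∃ u : ℕ → M,
    Tendsto u atTop (𝓝 x) ∧ Tendsto (fun k => g (φ k) (u k)) atTop (𝓝 y)}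

end

/-!
The dual action of `a_n = diag(1, β_n, γ_n)` is `[f] ↦ [f₁ : f₂ / β_n : f₃ / γ_n]`.
Rescaling the image by `γ_n` (when `f₃ ≠ 0`) or by `β_n` (when `f₂ ≠ 0`) makes it converge,
so every question about the dynamic set becomes one about limits of real sequences. For the
reverse inclusions one perturbs the starting form at a rate `s_n` with `s_n → a` and
`β_n / s_n → 0` (resp. `(γ_n / β_n) / s_n → 0`); for `a = 0` take `s_n = √|β_n|`.

To pass from sequences in `ℝP²` to sequences of vectors we use the continuous Veronese map
`[v] ↦ v vᵀ / |v|²`: applied to `f` it gives representatives, near `[f]`, that depend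
continuously on the point. It is also injective, which makes `ℝP²` Hausdorff.
-/

namespace RP2

variable {ι : Type*} {l : Filter ι}

lemma mk'_of_ne {v : V3} (hv : v ≠ 0) : mk' v = mk v hv := dif_neg hv

lemma mk'_smul {c : ℝ} (hc : c ≠ 0) (v : V3) : mk' (c • v) = mk' v := by
  rcases eq_or_ne v 0 with rfl | hv
  · rw [smul_zero]
  · rw [mk'_of_ne hv, mk'_of_ne (smul_ne_zero hc hv)]
    exact mk_eq_mk_iff.2 ⟨c⁻¹, inv_ne_zero hc, (inv_smul_smul₀ hc v).symm⟩

lemma exists_eq_smul_of_mk'_eq {v w : V3} (hv : v ≠ 0) (hw : w ≠ 0) (h : mk' v = mk' w) :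
    ∃ t : ℝ, w = t • v := by
  rw [mk'_of_ne hv, mk'_of_ne hw] at h
  obtain ⟨t, -, ht⟩ := mk_eq_mk_iff.1 h
  exact ⟨t, ht⟩

lemma mapMat_mk' (g : GL3) {v : V3} (hv : v ≠ 0) :
    mapMat g (mk' v) = mk' ((g : Matrix (Fin 3) (Fin 3) ℝ) *ᵥ v) := by
  rw [mk'_of_ne hv, mk'_of_ne (GL3.mulVec_ne hv), mapMat_mk]

lemma continuousOn_mk' : ContinuousOn mk' {v | v ≠ 0} := by
  rw [continuousOn_iff_continuous_domRestrict]
  have h : domRestrict {v : V3 | v ≠ 0} mk' = Quotient.mk projSetoid :=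
    funext fun a => dif_neg a.2
  rw [h]
  exact continuous_quot_mk

lemma tendsto_mk' {v : ι → V3} {f : V3} (hv : Tendsto v l (𝓝 f))
    (hf : f ≠ 0) : Tendsto (fun n => mk' (v n)) l (𝓝 (mk f hf)) := by
  rw [← mk'_of_ne hf]
  exact ((continuousOn_mk'.continuousAt (isOpen_ne.mem_nhds hf)).tendsto).comp hv

/-- `ver [v]` is the orthogonal projection onto the line `ℝ v`. -/
noncomputable def ver : RP2 → Matrix (Fin 3) (Fin 3) ℝ :=
  Quotient.lift (fun a => (a.1 ⬝ᵥ a.1)⁻¹ • vecMulVec a.1 a.1) (by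
    rintro ⟨v, hv⟩ ⟨w, hw⟩ ⟨c, hc, rfl⟩
    simp only [smul_dotProduct, dotProduct_smul, smul_vecMulVec, vecMulVec_smul, smul_smul,
      smul_eq_mul]
    congr 1
    have : v ⬝ᵥ v ≠ 0 := mt dotProduct_self_eq_zero.1 hv
    field_simp)

lemma ver_mk {v : V3} (hv : v ≠ 0) : ver (mk v hv) = (v ⬝ᵥ v)⁻¹ • vecMulVec v v := rfl

lemma continuous_ver : Continuous ver := by
  refine Continuous.quotient_lift ?_ _
  have hval : Continuous fun a : {v : V3 // v ≠ 0} => a.1 := continuous_subtype_val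
  exact ((hval.dotProduct hval).inv₀ fun a => mt dotProduct_self_eq_zero.1 a.2).smul
    (hval.matrix_vecMulVec hval)

lemma ver_mk_mulVec_self {v : V3} (hv : v ≠ 0) : ver (mk v hv) *ᵥ v = v := by
  rw [ver_mk, smul_mulVec, vecMulVec_mulVec, op_smul_eq_smul,
    inv_smul_smul₀ (mt dotProduct_self_eq_zero.1 hv)]

lemma mk'_ver_mulVec {p : RP2} {x : V3} (h : ver p *ᵥ x ≠ 0) : mk' (ver p *ᵥ x) = p := by
  induction p using RP2.ind with
  | h v hv =>
    rw [ver_mk, smul_mulVec, vecMulVec_mulVec, op_smul_eq_smul, smul_smul] at h ⊢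
    rw [mk'_smul (left_ne_zero_of_smul h), mk'_of_ne hv]

lemma ver_injective : Function.Injective ver := by
  intro p q hpq
  induction p using RP2.ind with
  | h v hv =>
    have hq : ver q *ᵥ v = v := by rw [← hpq, ver_mk_mulVec_self]
    have hne : ver q *ᵥ v ≠ 0 := by rw [hq]; exact hv
    rw [← mk'_ver_mulVec hne, hq, mk'_of_ne hv]

instance : T2Space RP2 := T2Space.of_injective_continuous ver_injective continuous_ver

lemma exists_tendsto_mk'_eq {u : ι → RP2} {f : V3} (hf : f ≠ 0)
    (hu : Tendsto u l (𝓝 (mk f hf))) :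
    ∃ v : ι → V3, Tendsto v l (𝓝 f) ∧ ∀ᶠ n in l, mk' (v n) = u n := by
  have hv : Tendsto (fun n => ver (u n) *ᵥ f) l (𝓝 f) := by
    have h := ((continuous_ver.matrix_mulVec (continuous_const (y := f))).tendsto (mk f hf)).comp hu
    rwa [Function.comp_def, ver_mk_mulVec_self] at h
  exact ⟨_, hv, (hv.eventually_ne hf).mono fun n => mk'_ver_mulVec⟩

lemma coord_eq_zero_of_tendsto [l.NeBot] {b : ι → V3} {w : V3} {hw : w ≠ 0} {i j : Fin 3}
    {a : ℝ} (ha : a ≠ 0) (hb : Tendsto (fun n => mk' (b n)) l (𝓝 (mk w hw)))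
    (hi : Tendsto (fun n => b n i) l (𝓝 0)) (hj : Tendsto (fun n => b n j) l (𝓝 a)) :
    w i = 0 := by
  obtain ⟨u, hu, hub⟩ := exists_tendsto_mk'_eq hw hb
  have hu_eq : ∀ᶠ n in l, u n j / b n j * b n i = u n i := by
    filter_upwards [hub, hu.eventually_ne hw, hj.eventually_ne ha] with n hn hun hbj
    obtain ⟨t, ht⟩ := exists_eq_smul_of_mk'_eq (ne_zero_of_coord j hbj) hun hn.symm
    simp only [ht, Pi.smul_apply, smul_eq_mul]
    field_simp
  have hlim : Tendsto (fun n => u n i) l (𝓝 (w j / a * 0)) :=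
    (((tendsto_pi_nhds.1 hu j).div hj ha).mul hi).congr' hu_eq
  simpa using tendsto_nhds_unique (tendsto_pi_nhds.1 hu i) hlim

end RP2

lemma mem_dynSet_mk_iff {g : ℕ → RP2 → RP2} {f : V3} (hf : f ≠ 0) {y : RP2} :
    y ∈ DynSet g (RP2.mk f hf) ↔ ∃ φ : ℕ → ℕ, StrictMono φ ∧ ∃ v : ℕ → V3,
      Tendsto v atTop (𝓝 f) ∧ Tendsto (fun k => g (φ k) (RP2.mk' (v k))) atTop (𝓝 y) := by
  constructor
  · rintro ⟨φ, hφ, u, hu, hy⟩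
    obtain ⟨v, hv, hvu⟩ := RP2.exists_tendsto_mk'_eq hf hu
    exact ⟨φ, hφ, v, hv, hy.congr' (hvu.mono fun k hk => by simp only [hk])⟩
  · rintro ⟨φ, hφ, v, hv, hy⟩
    exact ⟨φ, hφ, _, RP2.tendsto_mk' hv hf, hy⟩

lemma mem_dynSet_mk_of_tendsto {g : ℕ → RP2 → RP2} {f : V3} (hf : f ≠ 0) {v : ℕ → V3}
    (hv : Tendsto v atTop (𝓝 f)) {y : RP2}
    (hy : Tendsto (fun n => g n (RP2.mk' (v n))) atTop (𝓝 y)) : y ∈ DynSet g (RP2.mk f hf) :=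
  (mem_dynSet_mk_iff hf).2 ⟨id, strictMono_id, v, hv, hy⟩

lemma ne_zero_of_val_eq_diagonal {g : GL3} {d : V3}
    (hg : (g : Matrix (Fin 3) (Fin 3) ℝ) = diagonal d) (i : Fin 3) : d i ≠ 0 :=
  (Pi.isUnit_iff.1 (isUnit_diagonal.1 (hg ▸ g.isUnit)) i).ne_zero

lemma dualGL_val_of_val_eq_diagonal {g : GL3} {d : V3}
    (hg : (g : Matrix (Fin 3) (Fin 3) ℝ) = diagonal d) :
    (dualGL g : Matrix (Fin 3) (Fin 3) ℝ) = diagonal d⁻¹ := by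
  have hinv : (g : Matrix (Fin 3) (Fin 3) ℝ) * diagonal d⁻¹ = 1 := by
    rw [hg, diagonal_mul_diagonal, ← diagonal_one]
    exact congrArg diagonal (funext fun i => mul_inv_cancel₀ (ne_zero_of_val_eq_diagonal hg i))
  change ((g⁻¹ : GL3) : Matrix (Fin 3) (Fin 3) ℝ)ᵀ = _
  rw [Units.inv_eq_of_mul_eq_one_right hinv, diagonal_transpose]

lemma mapMat_dualGL_mk' {g : GL3} {d : V3} (hg : (g : Matrix (Fin 3) (Fin 3) ℝ) = diagonal d)
    {v : V3} (hv : v ≠ 0) {c : ℝ} (hc : c ≠ 0) :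
    RP2.mapMat (dualGL g) (RP2.mk' v) = RP2.mk' (c • (d⁻¹ * v)) := by
  rw [RP2.mapMat_mk' _ hv, dualGL_val_of_val_eq_diagonal hg, RP2.mk'_smul hc]
  exact congrArg RP2.mk' (funext (mulVec_diagonal _ _))

lemma tendsto_mapMat_dualGL_mk' {ι : Type*} {l : Filter ι} {g : ι → GL3} {d : ι → V3}
    (hg : ∀ n, (g n : Matrix (Fin 3) (Fin 3) ℝ) = diagonal (d n)) {v : ι → V3}
    (hv : ∀ᶠ n in l, v n ≠ 0) {c : ι → ℝ} (hc : ∀ n, c n ≠ 0) {w : V3} (hw : w ≠ 0)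
    (h : Tendsto (fun n => c n • ((d n)⁻¹ * v n)) l (𝓝 w)) :
    Tendsto (fun n => RP2.mapMat (dualGL (g n)) (RP2.mk' (v n))) l (𝓝 (RP2.mk w hw)) :=
  (RP2.tendsto_mk' h hw).congr' (hv.mono fun n hn => (mapMat_dualGL_mk' (hg n) hn (hc n)).symm)

lemma exists_ne_zero_tendsto_div_tendsto_zero {ι : Type*} {l : Filter ι} {r : ι → ℝ}
    (hr : Tendsto r l (𝓝 0)) (hr0 : ∀ n, r n ≠ 0) (a : ℝ) :
    ∃ s : ι → ℝ, (∀ n, s n ≠ 0) ∧ Tendsto s l (𝓝 a) ∧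
      Tendsto (fun n => r n / s n) l (𝓝 0) := by
  rcases eq_or_ne a 0 with rfl | ha
  · have hsqrt : Tendsto (fun n => √|r n|) l (𝓝 0) := by
      simpa [Function.comp_def] using
        ((Real.continuous_sqrt.comp continuous_abs).tendsto 0).comp hr
    refine ⟨fun n => √|r n|, fun n => (Real.sqrt_pos.2 (abs_pos.2 (hr0 n))).ne', hsqrt, ?_⟩
    refine tendsto_zero_iff_norm_tendsto_zero.2 (hsqrt.congr fun n => ?_)
    rw [norm_div, Real.norm_eq_abs, Real.norm_eq_abs, abs_of_nonneg (Real.sqrt_nonneg _),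
      Real.div_sqrt]
  · exact ⟨fun _ => a, fun _ => ha, tendsto_const_nhds, by simpa using hr.div_const a⟩

lemma tendsto_V3_iff {ι : Type*} {l : Filter ι} {v : ι → V3} {w : V3} :
    Tendsto v l (𝓝 w) ↔ Tendsto (fun n => v n 0) l (𝓝 (w 0)) ∧
      Tendsto (fun n => v n 1) l (𝓝 (w 1)) ∧ Tendsto (fun n => v n 2) l (𝓝 (w 2)) := by
  rw [tendsto_pi_nhds, Fin.forall_fin_succ, Fin.forall_fin_two]
  rfl

section BalancedDualDynamics

variable {β γ : ℕ → ℝ} {A : ℕ → GL3}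

lemma tendsto_mapMat_dualGL_of_coord_two_ne_zero
    (hA : ∀ n, (A n : Matrix (Fin 3) (Fin 3) ℝ) = diagonal ![1, β n, γ n])
    (hβ : Tendsto β atTop (𝓝 0)) (hratio : Tendsto (fun n => γ n / β n) atTop (𝓝 0))
    {v : ℕ → V3} {f : V3} (hv : Tendsto v atTop (𝓝 f)) (hf2 : f 2 ≠ 0) :
    Tendsto (fun n => RP2.mapMat (dualGL (A n)) (RP2.mk' (v n))) atTop
      (𝓝 (RP2.mk ![0, 0, 1] e3_ne)) := by
  have hβ0 (n : ℕ) : β n ≠ 0 := by simpa using ne_zero_of_val_eq_diagonal (hA n) 1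
  have hγ0 (n : ℕ) : γ n ≠ 0 := by simpa using ne_zero_of_val_eq_diagonal (hA n) 2
  have hγ : Tendsto γ atTop (𝓝 0) := by
    simpa [div_mul_cancel₀ _ (hβ0 _)] using hratio.mul hβ
  obtain ⟨hv0, hv1, hv2⟩ := tendsto_V3_iff.1 hv
  refine tendsto_mapMat_dualGL_mk' hA (hv.eventually_ne (ne_zero_of_coord 2 hf2))
    (fun n => div_ne_zero (hγ0 n) hf2) e3_ne (tendsto_V3_iff.2 ⟨?_, ?_, ?_⟩)
  · simpa using (hγ.div_const (f 2)).mul hv0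
  · have h := (hratio.mul hv1).div_const (f 2)
    rw [zero_mul, zero_div] at h
    refine h.congr fun n => ?_
    show γ n / β n * v n 1 / f 2 = γ n / f 2 * ((β n)⁻¹ * v n 1)
    ring
  · have h := hv2.div_const (f 2)
    rw [div_self hf2] at h
    refine h.congr fun n => ?_
    show v n 2 / f 2 = γ n / f 2 * ((γ n)⁻¹ * v n 2)
    field_simp [hγ0 n]

lemma coord_zero_eq_zero_of_tendsto_mapMat_dualGL
    (hA : ∀ n, (A n : Matrix (Fin 3) (Fin 3) ℝ) = diagonal ![1, β n, γ n])
    (hβ : Tendsto β atTop (𝓝 0)) {v : ℕ → V3} {f : V3} (hv : Tendsto v atTop (𝓝 f))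
    (hf1 : f 1 ≠ 0) {w : V3} {hw : w ≠ 0}
    (hy : Tendsto (fun n => RP2.mapMat (dualGL (A n)) (RP2.mk' (v n))) atTop
      (𝓝 (RP2.mk w hw))) :
    w 0 = 0 := by
  have hβ0 (n : ℕ) : β n ≠ 0 := by simpa using ne_zero_of_val_eq_diagonal (hA n) 1
  obtain ⟨hv0, hv1, -⟩ := tendsto_V3_iff.1 hv
  refine RP2.coord_eq_zero_of_tendsto (b := fun n => β n • ((![1, β n, γ n])⁻¹ * v n))
    (j := 1) hf1 (hy.congr' ?_) ?_ ?_
  · filter_upwards [hv.eventually_ne (ne_zero_of_coord 1 hf1)] with n hn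
    exact mapMat_dualGL_mk' (hA n) hn (hβ0 n)
  · simpa using hβ.mul hv0
  · refine hv1.congr fun n => ?_
    show v n 1 = β n * ((β n)⁻¹ * v n 1)
    rw [mul_inv_cancel_left₀ (hβ0 n)]

lemma exists_tendsto_mapMat_dualGL_of_coord_zero_eq_zero
    (hA : ∀ n, (A n : Matrix (Fin 3) (Fin 3) ℝ) = diagonal ![1, β n, γ n])
    (hβ : Tendsto β atTop (𝓝 0)) (hratio : Tendsto (fun n => γ n / β n) atTop (𝓝 0))
    {f : V3} (hf1 : f 1 ≠ 0) (hf2 : f 2 = 0) {w : V3} (hw : w ≠ 0) (hw0 : w 0 = 0) :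
    ∃ v : ℕ → V3, Tendsto v atTop (𝓝 f) ∧
      Tendsto (fun n => RP2.mapMat (dualGL (A n)) (RP2.mk' (v n))) atTop
      (𝓝 (RP2.mk w hw)) := by
  have hβ0 (n : ℕ) : β n ≠ 0 := by simpa using ne_zero_of_val_eq_diagonal (hA n) 1
  have hγ0 (n : ℕ) : γ n ≠ 0 := by simpa using ne_zero_of_val_eq_diagonal (hA n) 2
  obtain ⟨s, hs0, hs, hrs⟩ := exists_ne_zero_tendsto_div_tendsto_zero hratio
    (fun n => div_ne_zero (hγ0 n) (hβ0 n)) (w 1)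
  -- rescaled by `β n * s n / f 1`, the image of `v n` is `(β n * s n * f 0 / f 1, s n, w 2)`
  refine ⟨fun n => ![f 0, f 1, γ n / β n / s n * (f 1 * w 2)], ?_, ?_⟩
  · refine tendsto_V3_iff.2 ⟨tendsto_const_nhds, tendsto_const_nhds, ?_⟩
    simpa [hf2] using hrs.mul_const (f 1 * w 2)
  · refine tendsto_mapMat_dualGL_mk' hA
      (Eventually.of_forall fun n => ne_zero_of_coord 1 (by simpa using hf1))
      (c := fun n => β n * s n / f 1) (fun n => div_ne_zero (mul_ne_zero (hβ0 n) (hs0 n)) hf1)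
      hw (tendsto_V3_iff.2 ⟨?_, ?_, ?_⟩)
    · rw [hw0]
      simpa using ((hβ.mul hs).div_const (f 1)).mul_const (f 0)
    · refine hs.congr fun n => ?_
      show s n = β n * s n / f 1 * ((β n)⁻¹ * f 1)
      field_simp [hβ0 n]
    · refine tendsto_const_nhds.congr fun n => ?_
      show w 2 = β n * s n / f 1 * ((γ n)⁻¹ * (γ n / β n / s n * (f 1 * w 2)))
      field_simp [hβ0 n, hγ0 n, hs0 n]

lemma exists_tendsto_mapMat_dualGL_of_e1
    (hA : ∀ n, (A n : Matrix (Fin 3) (Fin 3) ℝ) = diagonal ![1, β n, γ n])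
    (hβ : Tendsto β atTop (𝓝 0)) (hratio : Tendsto (fun n => γ n / β n) atTop (𝓝 0))
    {w : V3} (hw : w ≠ 0) :
    ∃ v : ℕ → V3, Tendsto v atTop (𝓝 ![1, 0, 0]) ∧
      Tendsto (fun n => RP2.mapMat (dualGL (A n)) (RP2.mk' (v n))) atTop
      (𝓝 (RP2.mk w hw)) := by
  have hβ0 (n : ℕ) : β n ≠ 0 := by simpa using ne_zero_of_val_eq_diagonal (hA n) 1
  have hγ0 (n : ℕ) : γ n ≠ 0 := by simpa using ne_zero_of_val_eq_diagonal (hA n) 2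
  obtain ⟨s, hs0, hs, hβs⟩ := exists_ne_zero_tendsto_div_tendsto_zero hβ hβ0 (w 0)
  have hγs : Tendsto (fun n => γ n / s n) atTop (𝓝 0) := by
    simpa [div_mul_div_cancel₀ (hβ0 _)] using hratio.mul hβs
  -- rescaled by `s n`, the image of `v n` is `(s n, w 1, w 2)`
  refine ⟨fun n => ![1, β n / s n * w 1, γ n / s n * w 2], ?_, ?_⟩
  · exact tendsto_V3_iff.2 ⟨tendsto_const_nhds, by simpa using hβs.mul_const (w 1),
      by simpa using hγs.mul_const (w 2)⟩
  · refine tendsto_mapMat_dualGL_mk' hA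
      (Eventually.of_forall fun n => ne_zero_of_coord 0 (by simp)) hs0 hw
      (tendsto_V3_iff.2 ⟨by simpa using hs, ?_, ?_⟩)
    · refine tendsto_const_nhds.congr fun n => ?_
      show w 1 = s n * ((β n)⁻¹ * (β n / s n * w 1))
      field_simp [hβ0 n, hs0 n]
    · refine tendsto_const_nhds.congr fun n => ?_
      show w 2 = s n * ((γ n)⁻¹ * (γ n / s n * w 2))
      field_simp [hγ0 n, hs0 n]

end BalancedDualDynamics

theorem balanced_dual_dynamics_general
    (β γ : ℕ → ℝ)
    (hβ : Filter.Tendsto β Filter.atTop (nhds 0))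
    (hratio : Filter.Tendsto (fun n => γ n / β n) Filter.atTop (nhds 0))
    (A : ℕ → GL3)
    (hA : ∀ n, (A n : Matrix (Fin 3) (Fin 3) ℝ) = Matrix.diagonal ![1, β n, γ n]) :
    (∀ (f : V3) (hf : f ≠ 0), f 2 ≠ 0 →
      DynSet (fun n => RP2.mapMat (dualGL (A n))) (RP2.mk f hf) =
        {RP2.mk ![0, 0, 1] e3_ne}) ∧
    (∀ (f : V3) (hf : f ≠ 0), f 2 = 0 → ¬(f 1 = 0 ∧ f 2 = 0) →
      DynSet (fun n => RP2.mapMat (dualGL (A n))) (RP2.mk f hf) =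
        {q : RP2 | ∀ (w : V3) (hw : w ≠ 0), q = RP2.mk w hw → w 0 = 0}) ∧
    DynSet (fun n => RP2.mapMat (dualGL (A n))) (RP2.mk ![1, 0, 0] e1_ne) = Set.univ := by
  refine ⟨fun f hf hf2 => ?_, fun f hf hf2 hf12 => ?_, ?_⟩
  · refine Set.eq_singleton_iff_unique_mem.2 ⟨mem_dynSet_mk_of_tendsto hf tendsto_const_nhds
      (tendsto_mapMat_dualGL_of_coord_two_ne_zero hA hβ hratio tendsto_const_nhds hf2), ?_⟩
    rintro y hy
    obtain ⟨φ, hφ, v, hv, hy⟩ := (mem_dynSet_mk_iff hf).1 hy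
    exact tendsto_nhds_unique hy (tendsto_mapMat_dualGL_of_coord_two_ne_zero (fun n => hA (φ n))
      (hβ.comp hφ.tendsto_atTop) (hratio.comp hφ.tendsto_atTop) hv hf2)
  · have hf1 : f 1 ≠ 0 := fun h => hf12 ⟨h, hf2⟩
    ext q
    refine ⟨fun hq w hw hqw => ?_, fun hq => ?_⟩
    · obtain ⟨φ, hφ, v, hv, hy⟩ := (mem_dynSet_mk_iff hf).1 hq
      subst hqw
      exact coord_zero_eq_zero_of_tendsto_mapMat_dualGL (fun n => hA (φ n))
        (hβ.comp hφ.tendsto_atTop) hv hf1 hy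
    · induction q using RP2.ind with
      | h w hw =>
        obtain ⟨v, hv, hy⟩ := exists_tendsto_mapMat_dualGL_of_coord_zero_eq_zero hA hβ hratio
          hf1 hf2 hw (hq w hw rfl)
        exact mem_dynSet_mk_of_tendsto hf hv hy
  · refine Set.eq_univ_of_forall (RP2.ind fun w hw => ?_)
    obtain ⟨v, hv, hy⟩ := exists_tendsto_mapMat_dualGL_of_e1 hA hβ hratio hw
    exact mem_dynSet_mk_of_tendsto e1_ne hv hy

/-- Lemma 2.12 (balanced dynamics on the dual projective plane, diagonal case).
A class `[f₁ : f₂ : f₃]*` of linear forms is recorded through its coefficient vector,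
and `g` acts on it by `g · [f] = [f ∘ g⁻¹]`, i.e. through `dualGL g`. -/
theorem balanced_dual_dynamics
    (β γ : ℕ → ℝ) (hpos : ∀ n, 0 < γ n ∧ γ n ≤ β n ∧ β n ≤ 1)
    (hβ : Filter.Tendsto β Filter.atTop (nhds 0))
    (hratio : Filter.Tendsto (fun n => γ n / β n) Filter.atTop (nhds 0))
    (A : ℕ → GL3)
    (hA : ∀ n, (A n : Matrix (Fin 3) (Fin 3) ℝ) = Matrix.diagonal ![1, β n, γ n]) :
    (∀ (f : V3) (hf : f ≠ 0), f 2 ≠ 0 →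
      DynSet (fun n => RP2.mapMat (dualGL (A n))) (RP2.mk f hf) =
        {RP2.mk ![0, 0, 1] e3_ne}) ∧
    (∀ (f : V3) (hf : f ≠ 0), f 2 = 0 → ¬(f 1 = 0 ∧ f 2 = 0) →
      DynSet (fun n => RP2.mapMat (dualGL (A n))) (RP2.mk f hf) =
        {q : RP2 | ∀ (w : V3) (hw : w ≠ 0), q = RP2.mk w hw → w 0 = 0}) ∧
    DynSet (fun n => RP2.mapMat (dualGL (A n))) (RP2.mk ![1, 0, 0] e1_ne) = Set.univ :=
  balanced_dual_dynamics_general β γ hβ hratio A hA
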